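/- Darboux's method along a segment (first part of the Darboux lemma, Lemma \ref{Lem:AnaLim}): let α ≥ 1 be a real number, β, C ∈ ℂ, and let v_s ≠ v_t be complex numbers; let θ ∈ ℝ be such that v_t − v_s = |v_t − v_s|·e^{iθ}, and for z ∈ ℂ write (v_t−v_s)^z := exp(z·(log|v_t−v_s| + iθ)). Let (c_p)_{p≥0} be complex numbers such that p^{1−α}·(v_t−v_s)^{p−β}·c_p → C·(v_t−v_s)^{−α} as p → ∞. Then for every x ∈ (0,1) the series f(x) := Σ_{p≥0} c_p·x^{p−β}·(v_t−v_s)^{p−β} converges absolutely (f(x) is the value of the series Σ_p c_p·(v_t−ξ)^{p−β} at the point ξ = v_t − x·(v_t−v_s) of the open segment (v_s, v_t), with the argument of v_t−ξ taken equal to θ), and (1−x)^α·(v_t−v_s)^α·f(x) → C·Γ(α) as x → 1⁻; equivalently, Σ_p c_p·(v_t−ξ)^{p−β} = C·Γ(α)·(ξ−v_s)^{−α} + o(|ξ−v_s|^{−α}) as ξ → v_s along the segment, with the argument of ξ−v_s taken equal to θ. -/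

import Mathlib

/-!
Put `a_p := (v_t − v_s)^{p−β} c_p`, so that the summand is `x^{−β} a_p x^p` and the hypothesis
reads `p^{1−α} a_p → L := C (v_t − v_s)^{−α}`. The coefficients `d_p` of the binomial series
`(1 − x)^{−α} = Σ d_p x^p` satisfy `d_p ∼ p^{α−1} / Γ(α)` by Euler's limit formula for `Γ`, hence
`a_p = Γ(α) L d_p + o(d_p)`. Since `Σ d_p x^p → ∞` as `x → 1⁻`, an error that is `o(d_p)`
contributes only `o((1 − x)^{−α})` to the power series (an Abelian theorem), so
`(1 − x)^α Σ a_p x^p → Γ(α) L`; the factors `x^{−β} → 1` and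
`(v_t − v_s)^α (v_t − v_s)^{−α} = 1` finish the proof.
-/

open Filter Set Asymptotics
open scoped Topology Nat

/-- The power `(v_t − v_s)^z := exp(z·(log|v_t − v_s| + iθ))` with prescribed
argument `θ`. -/
noncomputable def cpowArg (w : ℂ) (θ : ℝ) (z : ℂ) : ℂ :=
  Complex.exp (z * (((Real.log ‖w‖ : ℝ) : ℂ) + (θ : ℂ) * Complex.I))

lemma cpowArg_mul_cpowArg_neg (w : ℂ) (θ : ℝ) (z : ℂ) :
    cpowArg w θ z * cpowArg w θ (-z) = 1 := by
  rw [cpowArg, cpowArg, ← Complex.exp_add, neg_mul, add_neg_cancel, Complex.exp_zero]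

lemma ascPochhammer_eval_eq_prod_range {R : Type*} [CommSemiring R] (r : R) (n : ℕ) :
    (ascPochhammer R n).eval r = ∏ j ∈ Finset.range n, (r + j) := by
  induction n with
  | zero => simp
  | succ n ih => simp [ascPochhammer_succ_right, Finset.prod_range_succ, ih]

lemma Ring.factorial_mul_multichoose {R : Type*} [CommRing R] [BinomialRing R] (r : R) (n : ℕ) :
    n ! * Ring.multichoose r n = (ascPochhammer R n).eval r := by
  rw [← nsmul_eq_mul, Ring.factorial_nsmul_multichoose_eq_ascPochhammer,
    Polynomial.ascPochhammer_smeval_eq_eval]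

namespace Real

lemma multichoose_pos {α : ℝ} (hα : 0 < α) (n : ℕ) : 0 < Ring.multichoose α n := by
  have h := Ring.factorial_mul_multichoose α n ▸ ascPochhammer_pos n α hα
  exact pos_of_mul_pos_right h (by positivity)

lemma hasSum_multichoose_mul_pow (α : ℝ) {x : ℝ} (hx : |x| < 1) :
    HasSum (fun n ↦ Ring.multichoose α n * x ^ n) ((1 - x) ^ (-α)) := by
  have h := (one_div_one_sub_rpow_hasFPowerSeriesOnBall_zero α).hasSum (y := x)
    (by simpa [enorm_eq_nnnorm, ← NNReal.coe_lt_one] using hx)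
  simp only [FormalMultilinearSeries.ofScalars_apply_eq, zero_add, smul_eq_mul] at h
  have h1x : 0 ≤ 1 - x := by linarith [le_abs_self x]
  simpa [Ring.multichoose_eq, rpow_neg h1x, mul_comm] using h

lemma tendsto_rpow_div_multichoose {α : ℝ} (hα : 0 < α) :
    Tendsto (fun n : ℕ ↦ (n : ℝ) ^ (α - 1) / Ring.multichoose α n) atTop (𝓝 (Gamma α)) := by
  have hratio : Tendsto (fun n : ℕ ↦ (α + n) / n) atTop (𝓝 1) := by
    have h : Tendsto (fun n : ℕ ↦ α / n + 1) atTop (𝓝 (0 + 1)) :=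
      (tendsto_const_div_atTop_nhds_zero_nat α).add tendsto_const_nhds
    rw [zero_add] at h
    refine h.congr' ?_
    filter_upwards [eventually_ne_atTop 0] with n hn
    field_simp
  have h := (GammaSeq_tendsto_Gamma α).mul hratio
  rw [mul_one] at h
  refine h.congr' ?_
  filter_upwards [eventually_ne_atTop 0] with n hn
  have hn' : (n : ℝ) ≠ 0 := Nat.cast_ne_zero.mpr hn
  have hm := multichoose_pos hα n
  rw [GammaSeq, Finset.prod_range_succ, ← ascPochhammer_eval_eq_prod_range,
    ← Ring.factorial_mul_multichoose, rpow_sub_one hn']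
  field_simp

end Real

section Abelian

variable {E : Type*} [NormedAddCommGroup E] [NormedSpace ℝ E]

lemma summable_pow_smul_of_isBigO [CompleteSpace E] {e : ℕ → E} {d : ℕ → ℝ}
    (he : e =O[atTop] d) {x : ℝ} (hx : 0 ≤ x) (hd : Summable fun p ↦ d p * x ^ p) :
    Summable fun p ↦ x ^ p • e p := by
  obtain ⟨C, hC⟩ := he.bound
  refine Summable.of_norm_bounded_eventually_nat (hd.abs.mul_left C) ?_
  filter_upwards [hC] with p hp
  rw [norm_smul, norm_pow, Real.norm_of_nonneg hx, abs_mul, abs_pow, abs_of_nonneg hx,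
    ← Real.norm_eq_abs]
  nlinarith [pow_nonneg hx p]

theorem isLittleO_tsum_pow_smul {e : ℕ → E} {d : ℕ → ℝ} (hd : ∀ p, 0 ≤ d p)
    (he : e =o[atTop] d) (hsum : ∀ᶠ x in 𝓝[<] 1, Summable fun p ↦ d p * x ^ p)
    (htop : Tendsto (fun x ↦ ∑' p, d p * x ^ p) (𝓝[<] 1) atTop) :
    (fun x ↦ ∑' p, x ^ p • e p) =o[𝓝[<] 1] fun x ↦ ∑' p, d p * x ^ p := by
  refine IsLittleO.of_bound fun c hc ↦ ?_
  obtain ⟨N, hN⟩ := (he.bound (half_pos hc)).exists_forall_of_atTop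
  set M := ∑ p ∈ Finset.range N, ‖e p‖
  -- the first `N` terms contribute at most `M`, which is eventually below `c / 2` of the total
  filter_upwards [Ioo_mem_nhdsLT one_pos, hsum, htop.eventually_ge_atTop (2 * M / c)]
    with x ⟨hx0, hx1⟩ hsx hlarge
  have hbound : ∀ p, ‖x ^ p • e p‖ ≤ (if p < N then ‖e p‖ else 0) + c / 2 * (d p * x ^ p) := by
    intro p
    have hxp := pow_nonneg hx0.le p
    rw [norm_smul, norm_pow, Real.norm_of_nonneg hx0.le]
    split_ifs with hp
    · have hxp1 : x ^ p ≤ 1 := pow_le_one₀ hx0.le hx1.le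
      nlinarith [mul_nonneg (sub_nonneg.mpr hxp1) (norm_nonneg (e p)),
        mul_nonneg (half_pos hc).le (mul_nonneg (hd p) hxp)]
    · have := hN p (not_lt.mp hp)
      rw [Real.norm_of_nonneg (hd p)] at this
      nlinarith
  have hhead : HasSum (fun p ↦ if p < N then ‖e p‖ else 0) M := by
    have h : HasSum (fun p ↦ if p < N then ‖e p‖ else 0) (∑ p ∈ Finset.range N, _) :=
      hasSum_sum_of_ne_finset_zero fun p hp ↦ if_neg (Finset.mem_range.not.mp hp)
    rwa [Finset.sum_congr rfl fun p hp ↦ if_pos (Finset.mem_range.mp hp)] at h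
  have hS : 0 ≤ ∑' p, d p * x ^ p := tsum_nonneg fun p ↦ mul_nonneg (hd p) (pow_nonneg hx0.le p)
  calc ‖∑' p, x ^ p • e p‖ ≤ M + c / 2 * ∑' p, d p * x ^ p :=
        tsum_of_norm_bounded (hhead.add (hsx.hasSum.mul_left _)) hbound
    _ ≤ c * ‖∑' p, d p * x ^ p‖ := by
        rw [Real.norm_of_nonneg hS]
        rw [div_le_iff₀ hc] at hlarge
        linarith

end Abelian

section PowerAsymptotics

variable {E : Type*} [NormedAddCommGroup E] [NormedSpace ℝ E] {α : ℝ} {a : ℕ → E} {L : E}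

lemma isLittleO_sub_multichoose_smul (hα : 0 < α)
    (ha : Tendsto (fun p : ℕ ↦ (p : ℝ) ^ (1 - α) • a p) atTop (𝓝 L)) :
    (fun p ↦ a p - Ring.multichoose α p • Real.Gamma α • L) =o[atTop]
      fun p ↦ Ring.multichoose α p := by
  have hratio : Tendsto (fun p ↦ (Ring.multichoose α p)⁻¹ • a p) atTop
      (𝓝 (Real.Gamma α • L)) := by
    refine ((Real.tendsto_rpow_div_multichoose hα).smul ha).congr' ?_
    filter_upwards [eventually_ne_atTop 0] with p hp
    have hp' : (0 : ℝ) < p := by exact_mod_cast Nat.pos_of_ne_zero hp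
    rw [smul_smul, div_mul_eq_mul_div, ← Real.rpow_add hp']
    simp
  have h := (isBigO_refl (fun p ↦ Ring.multichoose α p) atTop).smul_isLittleO
    (isLittleO_one_iff ℝ |>.mpr (tendsto_sub_nhds_zero_iff.mpr hratio))
  simpa [smul_sub, smul_inv_smul₀ (Real.multichoose_pos hα _).ne'] using h

variable [CompleteSpace E]

lemma summable_pow_smul_of_tendsto_rpow_smul (hα : 0 < α)
    (ha : Tendsto (fun p : ℕ ↦ (p : ℝ) ^ (1 - α) • a p) atTop (𝓝 L)) {x : ℝ}
    (hx : x ∈ Ico 0 1) : Summable fun p ↦ x ^ p • a p := by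
  have hconst : (fun p ↦ Ring.multichoose α p • Real.Gamma α • L) =O[atTop]
      fun p ↦ Ring.multichoose α p :=
    .of_bound ‖Real.Gamma α • L‖ (.of_forall fun p ↦ by rw [norm_smul, mul_comm])
  have hO : a =O[atTop] fun p ↦ Ring.multichoose α p :=
    ((isLittleO_sub_multichoose_smul hα ha).isBigO.add hconst).congr_left
      fun p ↦ sub_add_cancel _ _
  exact summable_pow_smul_of_isBigO hO hx.1
    (Real.hasSum_multichoose_mul_pow α (abs_lt.mpr ⟨by linarith [hx.1], hx.2⟩)).summable

lemma tendsto_const_sub_nhdsLT_nhdsGT_zero (a : ℝ) :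
    Tendsto (fun x : ℝ ↦ a - x) (𝓝[<] a) (𝓝[>] 0) := by
  refine tendsto_nhdsWithin_iff.mpr ⟨?_, ?_⟩
  · have h : Tendsto (fun x : ℝ ↦ a - x) (𝓝 a) (𝓝 (a - a)) := tendsto_const_nhds.sub tendsto_id
    rw [sub_self] at h
    exact h.mono_left nhdsWithin_le_nhds
  · filter_upwards [self_mem_nhdsWithin] with x (hx : x < a)
    exact sub_pos.mpr hx

theorem tendsto_one_sub_rpow_smul_tsum_pow_smul (hα : 0 < α)
    (ha : Tendsto (fun p : ℕ ↦ (p : ℝ) ^ (1 - α) • a p) atTop (𝓝 L)) :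
    Tendsto (fun x : ℝ ↦ (1 - x) ^ α • ∑' p, x ^ p • a p) (𝓝[<] 1) (𝓝 (Real.Gamma α • L)) := by
  set d : ℕ → ℝ := fun p ↦ Ring.multichoose α p
  set e : ℕ → E := fun p ↦ a p - d p • Real.Gamma α • L
  have he : e =o[atTop] d := isLittleO_sub_multichoose_smul hα ha
  have hunit : ∀ᶠ x in 𝓝[<] (1 : ℝ), x ∈ Ioo 0 1 := Ioo_mem_nhdsLT one_pos
  have hsum_d : ∀ᶠ x in 𝓝[<] (1 : ℝ), HasSum (fun p ↦ d p * x ^ p) ((1 - x) ^ (-α)) := by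
    filter_upwards [hunit] with x hx
    exact Real.hasSum_multichoose_mul_pow α (abs_lt.mpr ⟨by linarith [hx.1], hx.2⟩)
  have htop : Tendsto (fun x ↦ ∑' p, d p * x ^ p) (𝓝[<] 1) atTop := by
    refine ((tendsto_rpow_neg_nhdsGT_zero (neg_lt_zero.mpr hα)).comp
      (tendsto_const_sub_nhdsLT_nhdsGT_zero 1)).congr' ?_
    filter_upwards [hsum_d] with x hx
    exact hx.tsum_eq.symm
  have hO := isLittleO_tsum_pow_smul (fun p ↦ (Real.multichoose_pos hα p).le) he
    (hsum_d.mono fun x hx ↦ hx.summable) htop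
  have hsmall : Tendsto (fun x : ℝ ↦ (1 - x) ^ α • ∑' p, x ^ p • e p) (𝓝[<] 1) (𝓝 0) := by
    refine isLittleO_one_iff ℝ |>.mp <| ((isBigO_refl (fun x : ℝ ↦ (1 - x) ^ α) _).smul_isLittleO
      hO).congr' (.of_forall fun _ ↦ rfl) ?_
    filter_upwards [hsum_d, hunit] with x hx hx'
    rw [hx.tsum_eq, smul_eq_mul, ← Real.rpow_add (sub_pos.mpr hx'.2), add_neg_cancel,
      Real.rpow_zero]
  have hlim := hsmall.const_add (Real.Gamma α • L)
  rw [add_zero] at hlim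
  refine hlim.congr' ?_
  filter_upwards [hsum_d, hunit] with x hx hx'
  have hsplit : HasSum (fun p ↦ x ^ p • a p)
      (∑' p, x ^ p • e p + (1 - x) ^ (-α) • Real.Gamma α • L) := by
    refine ((summable_pow_smul_of_isBigO he.isBigO hx'.1.le hx.summable).hasSum.add
      (hx.smul_const _)).congr_fun fun p ↦ ?_
    module
  rw [hsplit.tsum_eq, smul_add, smul_smul, ← Real.rpow_add (sub_pos.mpr hx'.2), add_neg_cancel,
    Real.rpow_zero, one_smul, add_comm]

end PowerAsymptotics

lemma tendsto_ofReal_cpow_nhdsWithin_one (β : ℂ) (s : Set ℝ) :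
    Tendsto (fun x : ℝ ↦ (x : ℂ) ^ β) (𝓝[s] 1) (𝓝 1) := by
  have h : ContinuousAt (fun x : ℝ ↦ (x : ℂ) ^ β) 1 :=
    (continuousAt_cpow_const (Or.inl (by norm_num))).comp Complex.continuous_ofReal.continuousAt
  simpa using h.tendsto.mono_left nhdsWithin_le_nhds

theorem darboux_segment_general
    (α : ℝ) (hα : 1 ≤ α) (β C : ℂ) (vs vt : ℂ)
    (θ : ℝ)
    (c : ℕ → ℂ)
    (hlim : Tendsto
      (fun p : ℕ => (p : ℂ) ^ ((1 : ℂ) - (α : ℂ)) * cpowArg (vt - vs) θ ((p : ℂ) - β) * c p)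
      atTop (𝓝 (C * cpowArg (vt - vs) θ (-(α : ℂ))))) :
    (∀ x : ℝ, x ∈ Set.Ioo (0 : ℝ) 1 →
      Summable fun p : ℕ => c p * (x : ℂ) ^ ((p : ℂ) - β) * cpowArg (vt - vs) θ ((p : ℂ) - β)) ∧
    Tendsto
      (fun x : ℝ =>
        ((1 - x : ℝ) : ℂ) ^ (α : ℂ) * cpowArg (vt - vs) θ (α : ℂ) *
          ∑' p : ℕ, c p * (x : ℂ) ^ ((p : ℂ) - β) * cpowArg (vt - vs) θ ((p : ℂ) - β))
      (𝓝[Set.Ioo (0 : ℝ) 1] 1) (𝓝 (C * Complex.Gamma (α : ℂ))) := by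
  set pw := cpowArg (vt - vs) θ
  set a : ℕ → ℂ := fun p ↦ pw (p - β) * c p
  have hα0 : 0 < α := by linarith
  have ha : Tendsto (fun p : ℕ ↦ (p : ℝ) ^ (1 - α) • a p) atTop (𝓝 (C * pw (-α))) := by
    refine hlim.congr fun p ↦ ?_
    rw [Complex.real_smul, Complex.ofReal_cpow p.cast_nonneg]
    push_cast
    ring
  have hterm : ∀ x : ℝ, 0 < x → ∀ p : ℕ,
      c p * (x : ℂ) ^ ((p : ℂ) - β) * pw (p - β) = (x ^ p • a p) / (x : ℂ) ^ β := by
    intro x hx p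
    rw [Complex.cpow_sub _ _ (by exact_mod_cast hx.ne'), Complex.cpow_natCast, Complex.real_smul]
    push_cast
    ring
  refine ⟨fun x hx ↦ ?_, ?_⟩
  · simpa only [hterm x hx.1] using (summable_pow_smul_of_tendsto_rpow_smul hα0 ha
      (Ioo_subset_Ico_self hx)).div_const ((x : ℂ) ^ β)
  have hlim' := (((tendsto_one_sub_rpow_smul_tsum_pow_smul hα0 ha).mono_left
    (nhdsWithin_mono _ Ioo_subset_Iio_self)).div (tendsto_ofReal_cpow_nhdsWithin_one β (Ioo 0 1))
    one_ne_zero).const_mul (pw α)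
  have hval : pw α * (Real.Gamma α • (C * pw (-α)) / 1) = C * Complex.Gamma α := by
    rw [div_one, Complex.real_smul, ← Complex.Gamma_ofReal]
    linear_combination (C * Complex.Gamma α) * cpowArg_mul_cpowArg_neg (vt - vs) θ α
  rw [hval] at hlim'
  refine hlim'.congr' ?_
  filter_upwards [self_mem_nhdsWithin] with x hx
  rw [Pi.div_apply, tsum_congr (hterm x hx.1), tsum_div_const, Complex.real_smul,
    Complex.ofReal_cpow (sub_nonneg.mpr hx.2.le)]
  push_cast
  ring

/-- **Darboux's method along a segment.** If
`p^{1−α}·(v_t−v_s)^{p−β}·c_p → C·(v_t−v_s)^{−α}`, then for every `x ∈ (0,1)` the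
series `f(x) = Σ_p c_p·x^{p−β}·(v_t−v_s)^{p−β}` converges absolutely, and
`(1−x)^α·(v_t−v_s)^α·f(x) → C·Γ(α)` as `x → 1⁻`. -/
theorem darboux_segment
    (α : ℝ) (hα : 1 ≤ α) (β C : ℂ) (vs vt : ℂ) (hvst : vs ≠ vt)
    (θ : ℝ)
    (hθ : vt - vs = ((‖vt - vs‖ : ℝ) : ℂ) * Complex.exp ((θ : ℂ) * Complex.I))
    (c : ℕ → ℂ)
    (hlim : Tendsto
      (fun p : ℕ => (p : ℂ) ^ ((1 : ℂ) - (α : ℂ)) * cpowArg (vt - vs) θ ((p : ℂ) - β) * c p)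
      atTop (𝓝 (C * cpowArg (vt - vs) θ (-(α : ℂ))))) :
    (∀ x : ℝ, x ∈ Set.Ioo (0 : ℝ) 1 →
      Summable fun p : ℕ => c p * (x : ℂ) ^ ((p : ℂ) - β) * cpowArg (vt - vs) θ ((p : ℂ) - β)) ∧
    Tendsto
      (fun x : ℝ =>
        ((1 - x : ℝ) : ℂ) ^ (α : ℂ) * cpowArg (vt - vs) θ (α : ℂ) *
          ∑' p : ℕ, c p * (x : ℂ) ^ ((p : ℂ) - β) * cpowArg (vt - vs) θ ((p : ℂ) - β))
      (𝓝[Set.Ioo (0 : ℝ) 1] 1) (𝓝 (C * Complex.Gamma (α : ℂ))) :=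
  darboux_segment_general α hα β C vs vt θ c hlim
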